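/- Fix x ∈ ℝ^d, let p : ℝ^d → ℝ be strictly positive with log∘p differentiable at x, let δ ∈ ℝ^{d×m} be such that δWᵀ is symmetric, and let C ∈ ℝ be arbitrary. Then the following vector identity holds in ℝ^d: s_{θ+δ}(x) − ∇log p(x) = s_θ(x) − ∇log p̂_δ(x). -/

import Mathlib

/-! The tilting exponent `I(·, δ)` is a quadratic form plus a linear form, and as `δWᵀ` is
symmetric its gradient at `x` is `(1/m)(δWᵀx + δUᵀe) = s_δ(x)`. Since `log p̂_δ = log p − I(·, δ)`
and the score is linear in `θ`, both sides equal `s_θ(x) + s_δ(x) − ∇log p(x)`. -/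

open Matrix
open scoped RealInnerProductSpace

/-- The random-feature score model with linear activation:
`s_θ(x) = (1/m) · θ (Wᵀ x + Uᵀ e)`. -/
noncomputable def score (d m de : ℕ) (W : Matrix (Fin d) (Fin m) ℝ)
    (U : Matrix (Fin de) (Fin m) ℝ) (e : Fin de → ℝ)
    (θ : Matrix (Fin d) (Fin m) ℝ) (x : EuclideanSpace ℝ (Fin d)) :
    EuclideanSpace ℝ (Fin d) :=
  (m : ℝ)⁻¹ • ((WithLp.equiv 2 _).symm (θ.mulVec (Wᵀ.mulVec x + Uᵀ.mulVec e)) :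
    EuclideanSpace ℝ (Fin d))

/-- The tilting exponent `I(x, δ) = (1/(2m))·xᵀ(δWᵀ)x + (1/m)·xᵀ(δUᵀe) + C`. -/
noncomputable def tiltExp (d m de : ℕ) (W : Matrix (Fin d) (Fin m) ℝ)
    (U : Matrix (Fin de) (Fin m) ℝ) (e : Fin de → ℝ)
    (δ : Matrix (Fin d) (Fin m) ℝ) (C : ℝ) (x : EuclideanSpace ℝ (Fin d)) : ℝ :=
  (2 * (m : ℝ))⁻¹ * ⟪x, ((WithLp.equiv 2 _).symm ((δ * Wᵀ).mulVec x) :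
      EuclideanSpace ℝ (Fin d))⟫
    + (m : ℝ)⁻¹ * ⟪x, ((WithLp.equiv 2 _).symm (δ.mulVec (Uᵀ.mulVec e)) :
      EuclideanSpace ℝ (Fin d))⟫
    + C

/-- The perturbed density `p̂_δ(x) = e^{−I(x,δ)} · p(x)`. -/
noncomputable def tiltedDensity (d m de : ℕ) (W : Matrix (Fin d) (Fin m) ℝ)
    (U : Matrix (Fin de) (Fin m) ℝ) (e : Fin de → ℝ)
    (δ : Matrix (Fin d) (Fin m) ℝ) (C : ℝ)
    (p : EuclideanSpace ℝ (Fin d) → ℝ) (x : EuclideanSpace ℝ (Fin d)) : ℝ :=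
  Real.exp (-(tiltExp d m de W U e δ C x)) * p x

theorem LinearMap.IsSymmetric.hasGradientAt_quadratic {E : Type*} [NormedAddCommGroup E]
    [InnerProductSpace ℝ E] [CompleteSpace E] {T : E →L[ℝ] E} (hT : (T : E →ₗ[ℝ] E).IsSymmetric)
    (b : E) (c : ℝ) (x : E) :
    HasGradientAt (fun y => 2⁻¹ * ⟪y, T y⟫ + ⟪y, b⟫ + c) (T x + b) x := by
  rw [hasGradientAt_iff_hasFDerivAt]
  have hquad := (hasFDerivAt_id x).inner ℝ T.hasFDerivAt
  have hlin := (hasFDerivAt_id x).inner ℝ (hasFDerivAt_const b x)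
  refine (((hquad.const_mul 2⁻¹).add hlin).add_const c).congr_fderiv ?_
  ext h
  have hsymm : ⟪x, T h⟫ = ⟪T x, h⟫ := (hT x h).symm
  simp only [id_eq, _root_.add_apply, _root_.smul_apply, _root_.zero_apply,
    ContinuousLinearMap.comp_apply, ContinuousLinearMap.prod_apply, ContinuousLinearMap.id_apply,
    fderivInnerCLM_apply, inner_zero_right, hsymm,
    real_inner_comm h, smul_eq_mul, zero_add, map_add, InnerProductSpace.toDual_apply_apply]
  ring

theorem score_add (d m de : ℕ) (W : Matrix (Fin d) (Fin m) ℝ) (U : Matrix (Fin de) (Fin m) ℝ)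
    (e : Fin de → ℝ) (θ δ : Matrix (Fin d) (Fin m) ℝ) (x : EuclideanSpace ℝ (Fin d)) :
    score d m de W U e (θ + δ) x = score d m de W U e θ x + score d m de W U e δ x := by
  simp only [score, add_mulVec, WithLp.equiv_symm_apply, WithLp.toLp_add, smul_add]

theorem hasGradientAt_tiltExp (d m de : ℕ) (W : Matrix (Fin d) (Fin m) ℝ)
    (U : Matrix (Fin de) (Fin m) ℝ) (e : Fin de → ℝ) (δ : Matrix (Fin d) (Fin m) ℝ)
    (hsym : (δ * Wᵀ).IsSymm) (C : ℝ) (x : EuclideanSpace ℝ (Fin d)) :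
    HasGradientAt (tiltExp d m de W U e δ C) (score d m de W U e δ x) x := by
  set T := toEuclideanCLM (𝕜 := ℝ) ((m : ℝ)⁻¹ • (δ * Wᵀ))
  have hT : (T : EuclideanSpace ℝ (Fin d) →ₗ[ℝ] _).IsSymmetric :=
    isSymmetric_toEuclideanLin_iff.mpr (isHermitian_iff_isSymm.mpr (hsym.smul _))
  have hT_apply (y : EuclideanSpace ℝ (Fin d)) :
      T y = (m : ℝ)⁻¹ • WithLp.toLp 2 ((δ * Wᵀ) *ᵥ y.ofLp) := by
    simp only [T, map_smul, _root_.smul_apply]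
    rfl
  convert hT.hasGradientAt_quadratic ((m : ℝ)⁻¹ • WithLp.toLp 2 (δ *ᵥ Uᵀ *ᵥ e)) C x using 1
  · funext y
    simp only [tiltExp, WithLp.equiv_symm_apply, hT_apply, inner_smul_right]
    ring
  · simp only [score, mulVec_add, mulVec_mulVec, WithLp.equiv_symm_apply, WithLp.toLp_add,
      smul_add, hT_apply]

theorem hasGradientAt_log_tiltedDensity (d m de : ℕ) (W : Matrix (Fin d) (Fin m) ℝ)
    (U : Matrix (Fin de) (Fin m) ℝ) (e : Fin de → ℝ) (p : EuclideanSpace ℝ (Fin d) → ℝ)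
    (hp : ∀ y, 0 < p y) (x : EuclideanSpace ℝ (Fin d))
    (hlogp : DifferentiableAt ℝ (fun y => Real.log (p y)) x)
    (δ : Matrix (Fin d) (Fin m) ℝ) (hsym : (δ * Wᵀ).IsSymm) (C : ℝ) :
    HasGradientAt (fun y => Real.log (tiltedDensity d m de W U e δ C p y))
      (gradient (fun y => Real.log (p y)) x - score d m de W U e δ x) x := by
  have hlog_eq : (fun y => Real.log (tiltedDensity d m de W U e δ C p y))
      = fun y => Real.log (p y) - tiltExp d m de W U e δ C y := by
    funext y
    rw [tiltedDensity, Real.log_mul (Real.exp_ne_zero _) (hp y).ne', Real.log_exp, neg_add_eq_sub]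
  rw [hlog_eq, hasGradientAt_iff_hasFDerivAt, map_sub]
  exact hlogp.hasGradientAt.hasFDerivAt.sub
    (hasGradientAt_tiltExp d m de W U e δ hsym C x).hasFDerivAt

theorem score_perturbation_identity_general (d m de : ℕ)
    (θ W : Matrix (Fin d) (Fin m) ℝ) (U : Matrix (Fin de) (Fin m) ℝ) (e : Fin de → ℝ)
    (p : EuclideanSpace ℝ (Fin d) → ℝ) (hp : ∀ y, 0 < p y)
    (x : EuclideanSpace ℝ (Fin d))
    (hlogp : DifferentiableAt ℝ (fun y => Real.log (p y)) x)
    (δ : Matrix (Fin d) (Fin m) ℝ) (hsym : (δ * Wᵀ).IsSymm) (C : ℝ) :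
    score d m de W U e (θ + δ) x - gradient (fun y => Real.log (p y)) x
      = score d m de W U e θ x
        - gradient (fun y => Real.log (tiltedDensity d m de W U e δ C p y)) x := by
  rw [(hasGradientAt_log_tiltedDensity d m de W U e p hp x hlogp δ hsym C).gradient, score_add]
  abel

/-- For a strictly positive density `p` with `log ∘ p` differentiable at `x`,
a perturbation `δ` with `δWᵀ` symmetric, and any constant `C`, the vector identity
`s_{θ+δ}(x) − ∇ log p(x) = s_θ(x) − ∇ log p̂_δ(x)` holds in `ℝ^d`. -/
theorem score_perturbation_identity (d m de : ℕ) (hd : 0 < d) (hm : 0 < m) (hde : 0 < de)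
    (θ W : Matrix (Fin d) (Fin m) ℝ) (U : Matrix (Fin de) (Fin m) ℝ) (e : Fin de → ℝ)
    (p : EuclideanSpace ℝ (Fin d) → ℝ) (hp : ∀ y, 0 < p y)
    (x : EuclideanSpace ℝ (Fin d))
    (hlogp : DifferentiableAt ℝ (fun y => Real.log (p y)) x)
    (δ : Matrix (Fin d) (Fin m) ℝ) (hsym : (δ * Wᵀ).IsSymm) (C : ℝ) :
    score d m de W U e (θ + δ) x - gradient (fun y => Real.log (p y)) x
      = score d m de W U e θ x
        - gradient (fun y => Real.log (tiltedDensity d m de W U e δ C p y)) x :=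
  score_perturbation_identity_general d m de θ W U e p hp x hlogp δ hsym C
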